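/- arXiv:1604.00149 — 5 statements merged into one kernel-verified Lean document; each statement's English description precedes it below -/
import Mathlib

section
/- For every n ≥ 2, the Euclidean space ℝ^n contains a dense additive subgroup G such that both G and its complement meet every uncountable closed subset of ℝ^n (i.e., G is a Bernstein set in ℝ^n). -/
/-!
Enumerate the uncountable closed sets of a Polish `ℚ`-vector space (there are at most `𝔠` of
them) along a well-order in which every set has fewer than `𝔠` predecessors, while each set
has `𝔠` points. By transfinite recursion pick two points `a_x, b_x` of the `x`-th set such
that no `b_y` with `y ≤ x` lies in the `ℚ`-span of a countable dense set `D` and the `a_z`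
with `z ≤ x`. This is possible because a span of fewer than `𝔠` vectors has fewer than `𝔠`
elements, and for `b ∉ span A` the points `a` with `b ∈ span (insert a A)` are of the form
`q⁻¹ • (b - z)` with `z ∈ span A`. The span of `D` and all `a_x` is dense, meets every set in
`a_x`, and misses every `b_x`, since a span of an increasing union is the union of the spans.
-/

def IsBernstein {n : ℕ} (B : Set (Fin n → ℝ)) : Prop :=
  ∀ F : Set (Fin n → ℝ), IsClosed F → ¬ F.Countable →
    (B ∩ F).Nonempty ∧ (Bᶜ ∩ F).Nonempty

open Set Cardinal Submodule

universe u

theorem insert_union_image_Iio {α β : Type*} [PartialOrder α] (D : Set β) (f : α → β)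
    (x : α) : insert (f x) (D ∪ f '' Iio x) = D ∪ f '' Iic x := by
  rw [← Iio_insert, image_insert_eq, union_insert]

section RationalSpan

variable {V : Type*} [AddCommGroup V] [Module ℚ V]

theorem mk_span_rat_le (s : Set V) : #(span ℚ s) ≤ max #s ℵ₀ := by
  have hrange : (span ℚ s : Set V) = range (Finsupp.linearCombination ℚ ((↑) : s → V)) := by
    rw [← LinearMap.coe_range, Finsupp.range_linearCombination, Subtype.range_coe]
  calc #(span ℚ s) = #(range (Finsupp.linearCombination ℚ ((↑) : s → V))) := by
        rw [← hrange]; rfl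
    _ ≤ #(s →₀ ℚ) := mk_range_le
    _ ≤ max #s ℵ₀ := by
      rcases isEmpty_or_nonempty s with _ | _
      · exact le_max_of_le_right mk_le_aleph0
      · simp [mk_finsupp_lift_of_infinite']

theorem mk_span_rat_lt {κ : Cardinal} (hκ : ℵ₀ < κ) {s : Set V} (hs : #s < κ) :
    #(span ℚ s) < κ :=
  (mk_span_rat_le s).trans_lt (max_lt hs hκ)

theorem mk_setOf_exists_mem_span_insert_le {A B : Set V} (hB : ∀ b ∈ B, b ∉ span ℚ A) :
    #{a : V | ∃ b ∈ B, b ∈ span ℚ (insert a A)} ≤ #(B × ℚ × span ℚ A) := by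
  refine (mk_le_mk_of_subset ?_).trans
    (mk_range_le (f := fun t : B × ℚ × span ℚ A => t.2.1⁻¹ • ((t.1 : V) - t.2.2)))
  rintro a ⟨b, hbB, hb⟩
  obtain ⟨q, z, hz, rfl⟩ := mem_span_insert.1 hb
  have hq : q ≠ 0 := by
    rintro rfl
    exact hB _ hbB (by simpa using hz)
  exact ⟨(⟨_, hbB⟩, q, ⟨z, hz⟩), by simp [smul_smul, inv_mul_cancel₀ hq]⟩

variable {κ : Cardinal}

theorem exists_mem_forall_notMem_span_insert (hκ : ℵ₀ < κ) {A B E : Set V} (hA : #A < κ)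
    (hB : #B < κ) (hE : κ ≤ #E) (hBA : ∀ b ∈ B, b ∉ span ℚ A) :
    ∃ a ∈ E, ∀ b ∈ B, b ∉ span ℚ (insert a A) := by
  by_contra! h
  have hbad : #(B × ℚ × span ℚ A) < κ := by
    simp only [mk_prod, lift_id, lift_uzero, Cardinal.mkRat, lift_aleph0]
    exact mul_lt_of_lt hκ.le hB (mul_lt_of_lt hκ.le hκ (mk_span_rat_lt hκ hA))
  exact (hE.trans ((mk_le_mk_of_subset h).trans
    (mk_setOf_exists_mem_span_insert_le hBA))).not_gt hbad

theorem exists_pair_forall_notMem_span_insert (hκ : ℵ₀ < κ) {A B E : Set V} (hA : #A < κ)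
    (hB : #B < κ) (hE : κ ≤ #E) (hBA : ∀ b ∈ B, b ∉ span ℚ A) :
    ∃ a ∈ E, ∃ b ∈ E, ∀ b' ∈ insert b B, b' ∉ span ℚ (insert a A) := by
  obtain ⟨a, haE, ha⟩ := exists_mem_forall_notMem_span_insert hκ hA hB hE hBA
  have hsmall : #(span ℚ (insert a A)) < κ :=
    mk_span_rat_lt hκ (mk_insert_le.trans_lt (add_lt_of_lt hκ.le hA (one_lt_aleph0.trans hκ)))
  obtain ⟨b, hbE, hb⟩ : ∃ b ∈ E, b ∉ span ℚ (insert a A) := not_subset.1 fun h =>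
    (hE.trans (mk_le_mk_of_subset h)).not_gt hsmall
  exact ⟨a, haE, b, hbE, forall_mem_insert.2 ⟨hb, ha⟩⟩

theorem notMem_span_union_image {ι : Type*} [LinearOrder ι] {D : Set V} {f : ι → V}
    {s : Set ι} {v : V} {y : ι} (hy : y ∈ s)
    (h : ∀ x ∈ s, y ≤ x → v ∉ span ℚ (D ∪ f '' Iic x)) :
    v ∉ span ℚ (D ∪ f '' s) := by
  intro hv
  set S : s → Submodule ℚ V := fun x => span ℚ (D ∪ f '' Iic (max (x : ι) y))
  have hS : Monotone S := fun x x' hxx' =>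
    span_mono <| union_subset_union_right _ <|
      image_mono (Iic_subset_Iic.2 (max_le_max_right y hxx'))
  have hle : span ℚ (D ∪ f '' s) ≤ ⨆ x, S x := by
    refine span_le.2 (union_subset ?_ ?_)
    · exact fun d hd => mem_iSup_of_mem (⟨y, hy⟩ : s) (subset_span (Or.inl hd))
    · rintro _ ⟨z, hz, rfl⟩
      exact mem_iSup_of_mem (⟨z, hz⟩ : s) (subset_span (Or.inr ⟨z, le_max_left z y, rfl⟩))
  have : Nonempty s := ⟨⟨y, hy⟩⟩
  obtain ⟨x, hx⟩ := (mem_iSup_of_directed S hS.directed_le).1 (hle hv)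
  exact h _ (max_rec' s x.2 hy) (le_max_right _ _) hx

end RationalSpan

namespace BernsteinConstruction

variable {V ι : Type u} [AddCommGroup V] [Module ℚ V] [LinearOrder ι]
  (e : ι → Set V) (D : Set V)

/-- At stage `x` the pair `q` is chosen: `q.1` goes into the subspace, while `q.2` and the
second coordinates of the earlier stages stay out of it. -/
def IsGoodPair (p : ι → V × V) (x : ι) (q : V × V) : Prop :=
  q.1 ∈ e x ∧ q.2 ∈ e x ∧ ∀ b ∈ insert q.2 ((Prod.snd ∘ p) '' Iio x),
    b ∉ span ℚ (insert q.1 (D ∪ (Prod.fst ∘ p) '' Iio x))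

theorem isGoodPair_congr {p p' : ι → V × V} {x : ι} (h : EqOn p p' (Iio x)) :
    IsGoodPair e D p x = IsGoodPair e D p' x := by
  unfold IsGoodPair
  rw [image_congr (h.comp_left (g := Prod.fst)), image_congr (h.comp_left (g := Prod.snd))]

theorem IsGoodPair.snd_notMem_span {p : ι → V × V} {x : ι} (h : IsGoodPair e D p x (p x))
    {y : ι} (hyx : y ≤ x) : (p y).2 ∉ span ℚ (D ∪ (Prod.fst ∘ p) '' Iic x) := by
  rw [← insert_union_image_Iio]
  refine h.2.2 _ ?_
  rcases hyx.eq_or_lt with rfl | hyx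
  · exact mem_insert _ _
  · exact mem_insert_of_mem _ ⟨y, hyx, rfl⟩

variable [WellFoundedLT ι]

noncomputable def seq : ι → V × V :=
  wellFounded_lt.fix fun x g =>
    Classical.epsilon (IsGoodPair e D (fun y => if h : y < x then g y h else 0) x)

theorem seq_eq (x : ι) : seq e D x = Classical.epsilon (IsGoodPair e D (seq e D) x) := by
  rw [seq, wellFounded_lt.fix_eq, ← seq]
  congr 1
  exact isGoodPair_congr e D fun y hy => dif_pos hy

theorem isGoodPair_seq {κ : Cardinal} (hκ : ℵ₀ < κ) (hD : #D < κ)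
    (hι : ∀ x : ι, #(Iio x) < κ) (he : ∀ x, κ ≤ #(e x)) (x : ι) :
    IsGoodPair e D (seq e D) x (seq e D x) := by
  induction x using WellFoundedLT.induction with | ind x ih
  set p := seq e D
  have hA : #(D ∪ (Prod.fst ∘ p) '' Iio x : Set V) < κ :=
    (mk_union_le _ _).trans_lt (add_lt_of_lt hκ.le hD (mk_image_le.trans_lt (hι x)))
  have hB : #((Prod.snd ∘ p) '' Iio x) < κ := mk_image_le.trans_lt (hι x)
  have hBA : ∀ b ∈ (Prod.snd ∘ p) '' Iio x,
      b ∉ span ℚ (D ∪ (Prod.fst ∘ p) '' Iio x) := by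
    rintro _ ⟨y, hy, rfl⟩
    exact notMem_span_union_image hy fun z hz hyz => (ih z hz).snd_notMem_span e D hyz
  obtain ⟨a, ha, b, hb, hab⟩ := exists_pair_forall_notMem_span_insert hκ hA hB (he x) hBA
  change IsGoodPair e D p x (seq e D x)
  rw [seq_eq]
  exact Classical.epsilon_spec (p := IsGoodPair e D p x) ⟨(a, b), ha, hb, hab⟩

theorem exists_submodule_inter_nonempty {κ : Cardinal} (hκ : ℵ₀ < κ) (hD : #D < κ)
    (hι : ∀ x : ι, #(Iio x) < κ) (he : ∀ x, κ ≤ #(e x)) :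
    ∃ W : Submodule ℚ V, D ⊆ W ∧
      ∀ x, ((W : Set V) ∩ e x).Nonempty ∧ ((W : Set V)ᶜ ∩ e x).Nonempty := by
  have hgood := isGoodPair_seq e D hκ hD hι he
  refine ⟨span ℚ (D ∪ range (Prod.fst ∘ seq e D)), subset_union_left.trans subset_span,
    fun x => ⟨⟨(seq e D x).1, subset_span (Or.inr ⟨x, rfl⟩), (hgood x).1⟩,
      ⟨(seq e D x).2, ?_, (hgood x).2.1⟩⟩⟩
  rw [← image_univ]
  exact notMem_span_union_image (mem_univ x) fun z _ hxz =>
    (hgood z).snd_notMem_span e D hxz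

end BernsteinConstruction

theorem exists_submodule_inter_nonempty_of_mk_le {V : Type u} [AddCommGroup V] [Module ℚ V]
    {κ : Cardinal} (hκ : ℵ₀ < κ) {D : Set V} (hD : #D < κ) {𝓕 : Set (Set V)}
    (h𝓕 : #𝓕 ≤ κ) (hF : ∀ F ∈ 𝓕, κ ≤ #F) :
    ∃ W : Submodule ℚ V, D ⊆ W ∧
      ∀ F ∈ 𝓕, ((W : Set V) ∩ F).Nonempty ∧ ((W : Set V)ᶜ ∩ F).Nonempty := by
  obtain ⟨_, _, hord⟩ := exists_ord_eq_type_lt 𝓕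
  obtain ⟨W, hDW, hW⟩ := BernsteinConstruction.exists_submodule_inter_nonempty
    (Subtype.val : 𝓕 → Set V) D hκ hD (fun F => (mk_Iio_lt F hord).trans_le h𝓕)
    (fun F => hF F F.2)
  exact ⟨W, hDW, fun F hF => hW ⟨F, hF⟩⟩

theorem mk_setOf_isClosed_le_continuum (X : Type u) [TopologicalSpace X]
    [SecondCountableTopology X] : #{F : Set X | IsClosed F} ≤ 𝔠 := by
  obtain ⟨B, hBc, -, hB⟩ := TopologicalSpace.exists_countable_basis X
  have hsub : {F : Set X | IsClosed F} ⊆ (fun t => (⋃₀ t)ᶜ) '' 𝒫 B := fun F hF =>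
    ⟨{s ∈ B | s ⊆ Fᶜ}, sep_subset _ _, by
      dsimp only; rw [← hB.open_eq_sUnion' hF.isOpen_compl, compl_compl]⟩
  calc #{F : Set X | IsClosed F} ≤ #(𝒫 B) := (mk_le_mk_of_subset hsub).trans mk_image_le
    _ = 2 ^ #B := mk_powerset B
    _ ≤ 2 ^ ℵ₀ := power_le_power_left two_ne_zero hBc.le_aleph0
    _ = 𝔠 := two_power_aleph0

theorem IsClosed.continuum_le_mk_of_not_countable {X : Type u} [TopologicalSpace X]
    [PolishSpace X] {F : Set X} (hF : IsClosed F) (hFc : ¬ F.Countable) : 𝔠 ≤ #F := by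
  obtain ⟨f, hfF, -, hf⟩ := hF.exists_nat_bool_injection_of_not_countable hFc
  have := lift_mk_le_lift_mk_of_injective (hf.codRestrict fun x => hfF ⟨x, rfl⟩)
  simpa using this

theorem exists_dense_submodule_bernstein (X : Type u) [AddCommGroup X] [Module ℚ X]
    [TopologicalSpace X] [PolishSpace X] :
    ∃ W : Submodule ℚ X, Dense (W : Set X) ∧ ∀ F : Set X, IsClosed F → ¬ F.Countable →
      ((W : Set X) ∩ F).Nonempty ∧ ((W : Set X)ᶜ ∩ F).Nonempty := by
  obtain ⟨D, hDc, hDd⟩ := TopologicalSpace.exists_countable_dense X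
  obtain ⟨W, hDW, hW⟩ := exists_submodule_inter_nonempty_of_mk_le aleph0_lt_continuum
    (hDc.le_aleph0.trans_lt aleph0_lt_continuum) (𝓕 := {F | IsClosed F ∧ ¬ F.Countable})
    ((mk_le_mk_of_subset fun F hF => hF.1).trans (mk_setOf_isClosed_le_continuum X))
    fun F hF => hF.1.continuum_le_mk_of_not_countable hF.2
  exact ⟨W, hDd.mono hDW, fun F hF hFc => hW F ⟨hF, hFc⟩⟩

theorem stmt0_general (n : ℕ) :
    ∃ G : AddSubgroup (Fin n → ℝ), Dense (G : Set (Fin n → ℝ)) ∧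
      IsBernstein (G : Set (Fin n → ℝ)) := by
  obtain ⟨W, hW, hB⟩ := exists_dense_submodule_bernstein (Fin n → ℝ)
  exact ⟨W.toAddSubgroup, hW, hB⟩

theorem stmt0 (n : ℕ) (hn : 2 ≤ n) :
    ∃ G : AddSubgroup (Fin n → ℝ), Dense (G : Set (Fin n → ℝ)) ∧
      IsBernstein (G : Set (Fin n → ℝ)) :=
  stmt0_general n
end

section
/- Every Bernstein subset of ℝ^n for n ≥ 2 is connected. -/
theorem stmt2 (n : ℕ) (hn : 2 ≤ n) (B : Set (Fin n → ℝ)) (hB : IsBernstein B) :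
    IsConnected B := by
  haveI : Nonempty (Fin n) := ⟨⟨0, by omega⟩⟩
  have hball : ∀ (x : Fin n → ℝ) (ε : ℝ), 0 < ε → ¬ (Metric.closedBall x ε).Countable := by
    intro x ε hε hc
    have h0 : (MeasureTheory.volume (Metric.closedBall x ε)) = 0 := hc.measure_zero _
    have hpos := Metric.measure_closedBall_pos MeasureTheory.volume x hε
    exact hpos.ne' h0
  have hrank : 1 < Module.rank ℝ (Fin n → ℝ) := by
    rw [rank_fin_fun]
    exact_mod_cast Nat.lt_of_lt_of_le one_lt_two hn
  constructor
  · obtain ⟨⟨y, hy, _⟩, -⟩ := hB (Metric.closedBall 0 1) Metric.isClosed_closedBall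
      (hball 0 1 one_pos)
    exact ⟨y, hy⟩
  · intro U V hU hV hBUV hBU hBV
    by_contra h
    have hBUVempty : B ∩ (U ∩ V) = ∅ := Set.not_nonempty_iff_eq_empty.mp h
    -- U ∩ V is empty
    have hUV : U ∩ V = ∅ := by
      by_contra hne
      obtain ⟨x, hx⟩ := Set.nonempty_iff_ne_empty.mpr hne
      obtain ⟨ε, hε, hsub⟩ := Metric.isOpen_iff.mp (hU.inter hV) x hx
      have hsub' : Metric.closedBall x (ε/2) ⊆ U ∩ V :=
        (Metric.closedBall_subset_ball (by linarith)).trans hsub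
      obtain ⟨⟨y, hyB, hyF⟩, -⟩ := hB (Metric.closedBall x (ε/2)) Metric.isClosed_closedBall
        (hball x (ε/2) (by linarith))
      have : y ∈ B ∩ (U ∩ V) := ⟨hyB, hsub' hyF⟩
      rw [hBUVempty] at this
      exact this
    -- complement of U ∪ V is countable
    have hCc : ((U ∪ V)ᶜ).Countable := by
      by_contra hc
      obtain ⟨⟨y, hyB, hyC⟩, -⟩ := hB (U ∪ V)ᶜ (hU.union hV).isClosed_compl hc
      exact hyC (hBUV hyB)
    have hconn : IsConnected ((U ∪ V)ᶜ)ᶜ :=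
      hCc.isConnected_compl_of_one_lt_rank hrank
    rw [compl_compl] at hconn
    obtain ⟨x, hxB, hxU⟩ := hBU
    obtain ⟨y, hyB, hyV⟩ := hBV
    have := hconn.isPreconnected U V hU hV subset_rfl
      ⟨x, Set.mem_union_left _ hxU, hxU⟩ ⟨y, Set.mem_union_right _ hyV, hyV⟩
    obtain ⟨z, _, hz⟩ := this
    rw [hUV] at hz
    exact hz
end

section
/- Every Bernstein subset B of ℝ^n for n ≥ 2 is locally connected: for every open set U ⊆ ℝ^n homeomorphic to ℝ^n, the intersection U ∩ B is connected. -/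
open Metric MeasureTheory Set

/-- The Cantor space is uncountable. -/
lemma bern_aux_cantor : ¬ (Set.univ : Set (ℕ → Bool)).Countable := by
  intro h
  rw [Set.countable_univ_iff] at h
  obtain ⟨g, hg⟩ := exists_injective_nat (ℕ → Bool)
  classical
  have hinj : Function.Injective (fun S : Set ℕ => fun n => decide (n ∈ S)) := by
    intro S T hST
    ext m
    have := congrFun hST m
    simpa using this
  exact Function.cantor_injective (g ∘ _) (hg.comp hinj)

/-- Separated sets in a metric space have disjoint open neighborhoods. -/
lemma bern_sep {X : Type*} [MetricSpace X] {P Q : Set X}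
    (hPQ : ∀ x ∈ P, x ∉ closure Q) (hQP : ∀ x ∈ Q, x ∉ closure P)
    (hPne : P.Nonempty) (hQne : Q.Nonempty) :
    ∃ V W : Set X, IsOpen V ∧ IsOpen W ∧ P ⊆ V ∧ Q ⊆ W ∧ Disjoint V W := by
  refine ⟨{x | infDist x P < infDist x Q}, {x | infDist x Q < infDist x P},
    isOpen_lt (continuous_infDist_pt P) (continuous_infDist_pt Q),
    isOpen_lt (continuous_infDist_pt Q) (continuous_infDist_pt P), ?_, ?_, ?_⟩
  · intro p hp
    have h1 : infDist p P = 0 := infDist_zero_of_mem hp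
    have h2 : 0 < infDist p Q := by
      rw [← infDist_closure]
      exact (isClosed_closure.notMem_iff_infDist_pos hQne.closure).mp (hPQ p hp)
    simpa [Set.mem_setOf_eq, h1] using h2
  · intro q hq
    have h1 : infDist q Q = 0 := infDist_zero_of_mem hq
    have h2 : 0 < infDist q P := by
      rw [← infDist_closure]
      exact (isClosed_closure.notMem_iff_infDist_pos hPne.closure).mp (hQP q hq)
    simpa [Set.mem_setOf_eq, h1] using h2
  · rw [Set.disjoint_left]
    intro x h1 h2
    simp only [Set.mem_setOf_eq] at h1 h2
    exact lt_asymm h1 h2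

/-- A ball of positive radius is homeomorphic to the whole space. -/
lemma bern_ball_homeo (n : ℕ) (c : Fin n → ℝ) {r : ℝ} (hr : 0 < r) :
    Nonempty ((Metric.ball c r : Set (Fin n → ℝ)) ≃ₜ (Fin n → ℝ)) := by
  set h : (Fin n → ℝ) ≃ₜ (Fin n → ℝ) :=
    (Homeomorph.smulOfNeZero r hr.ne').trans (Homeomorph.addLeft c) with hh
  have himg : ⇑h '' (Metric.ball (0 : Fin n → ℝ) 1) = Metric.ball c r := by
    have : ⇑h '' (Metric.ball (0 : Fin n → ℝ) 1)
        = (fun y => c + y) '' ((fun y => r • y) '' (Metric.ball (0 : Fin n → ℝ) 1)) := by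
      rw [← Set.image_comp]
      rfl
    rw [this, Set.image_smul, smul_unitBall_of_pos hr]
    ext y
    simp only [Set.mem_image]
    constructor
    · rintro ⟨z, hz, rfl⟩
      have := vadd_ball_zero r c ▸ Set.vadd_mem_vadd_set (a := c) hz
      simpa [vadd_eq_add] using this
    · intro hy
      refine ⟨y - c, ?_, by abel⟩
      simpa [mem_ball, dist_eq_norm] using mem_ball.mp hy
  exact ⟨((Homeomorph.setCongr himg).symm.trans (Homeomorph.image h _).symm).trans
    (Homeomorph.unitBall).symm⟩

/-- Main connectedness lemma. -/
lemma bern_conn (n : ℕ) (hn : 2 ≤ n) (B : Set (Fin n → ℝ)) (hB : IsBernstein B)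
    (U : Set (Fin n → ℝ)) (hU : IsOpen U) (hE : Nonempty (U ≃ₜ (Fin n → ℝ))) :
    IsConnected (U ∩ B) := by
  obtain ⟨e⟩ := hE
  have hrank : 1 < Module.rank ℝ (Fin n → ℝ) := by
    rw [rank_fun']
    simp only [Fintype.card_fin]
    exact_mod_cast Nat.lt_of_lt_of_le one_lt_two hn
  haveI : Nonempty (Fin n) := ⟨⟨0, by omega⟩⟩
  have hUne : U.Nonempty := ⟨(e.symm 0 : U), (e.symm 0).2⟩
  have hne : (U ∩ B).Nonempty := by
    obtain ⟨x, hx⟩ := hUne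
    obtain ⟨r, hr, hball⟩ := Metric.isOpen_iff.mp hU x hx
    have hcb : Metric.closedBall x (r / 2) ⊆ U := fun y hy =>
      hball (lt_of_le_of_lt (mem_closedBall.mp hy) (by linarith))
    have hcount : ¬ (Metric.closedBall x (r / 2)).Countable := by
      intro hc
      have h0 : volume (Metric.closedBall x (r / 2)) = 0 := hc.measure_zero _
      have hpos : (0 : ENNReal) < volume (Metric.closedBall x (r / 2)) :=
        measure_closedBall_pos _ _ (by linarith)
      simp [h0] at hpos
    obtain ⟨b, hbB, hbF⟩ := (hB _ Metric.isClosed_closedBall hcount).1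
    exact ⟨b, hcb hbF, hbB⟩
  refine ⟨hne, ?_⟩
  intro u v hu hv hcover hune hvne
  by_contra hcon
  rw [Set.not_nonempty_iff_eq_empty] at hcon
  obtain ⟨p, hpUB, hpu⟩ := hune
  obtain ⟨q, hqUB, hqv⟩ := hvne
  set P : Set (Fin n → ℝ) := (U ∩ B) ∩ u with hP
  set Q : Set (Fin n → ℝ) := (U ∩ B) ∩ v with hQ
  have hPQ : ∀ x ∈ P, x ∉ closure Q := by
    rintro x ⟨hxUB, hxu⟩ hxcl
    obtain ⟨y, hyu, hyQ⟩ := mem_closure_iff.mp hxcl u hu hxu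
    have : y ∈ (U ∩ B) ∩ (u ∩ v) := ⟨hyQ.1, hyu, hyQ.2⟩
    simp [hcon] at this
  have hQP : ∀ x ∈ Q, x ∉ closure P := by
    rintro x ⟨hxUB, hxv⟩ hxcl
    obtain ⟨y, hyv, hyP⟩ := mem_closure_iff.mp hxcl v hv hxv
    have : y ∈ (U ∩ B) ∩ (u ∩ v) := ⟨hyP.1, hyP.2, hyv⟩
    simp [hcon] at this
  obtain ⟨V, W, hVo, hWo, hPV, hQW, hVW⟩ :=
    bern_sep hPQ hQP ⟨p, hpUB, hpu⟩ ⟨q, hqUB, hqv⟩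
  have hcoverVW : U ∩ B ⊆ V ∪ W := by
    intro x hx
    rcases hcover hx with hxu | hxv
    · exact Or.inl (hPV ⟨hx, hxu⟩)
    · exact Or.inr (hQW ⟨hx, hxv⟩)
  set V₁ : Set (Fin n → ℝ) := ⇑e '' (Subtype.val ⁻¹' V) with hV₁
  set W₁ : Set (Fin n → ℝ) := ⇑e '' (Subtype.val ⁻¹' W) with hW₁
  have hV₁o : IsOpen V₁ := e.isOpenMap _ (hVo.preimage continuous_subtype_val)
  have hW₁o : IsOpen W₁ := e.isOpenMap _ (hWo.preimage continuous_subtype_val)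
  have hV₁ne : V₁.Nonempty := ⟨e ⟨p, hpUB.1⟩, Set.mem_image_of_mem _ (hPV ⟨hpUB, hpu⟩)⟩
  have hW₁ne : W₁.Nonempty := ⟨e ⟨q, hqUB.1⟩, Set.mem_image_of_mem _ (hQW ⟨hqUB, hqv⟩)⟩
  have hdisj : Disjoint V₁ W₁ := by
    rw [Set.disjoint_left]
    rintro z ⟨a, ha, rfl⟩ ⟨b, hb, hab⟩
    have hba : b = a := e.injective hab
    exact (Set.disjoint_left.mp hVW) ha (hba ▸ hb)
  set S : Set (Fin n → ℝ) := (V₁ ∪ W₁)ᶜ with hS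
  have hSclosed : IsClosed S := (hV₁o.union hW₁o).isClosed_compl
  have hSunc : ¬ S.Countable := by
    intro hc
    have hpc := hc.isPathConnected_compl_of_one_lt_rank hrank
    rw [hS, compl_compl] at hpc
    have hconn := hpc.isConnected.isPreconnected
    have := hconn V₁ W₁ hV₁o hW₁o subset_rfl
      (hV₁ne.mono fun z hz => ⟨Or.inl hz, hz⟩)
      (hW₁ne.mono fun z hz => ⟨Or.inr hz, hz⟩)
    obtain ⟨z, _, hzV, hzW⟩ := this
    exact (Set.disjoint_left.mp hdisj) hzV hzW
  obtain ⟨f, hfS, hfc, hfinj⟩ := hSclosed.exists_nat_bool_injection_of_not_countable hSunc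
  set g : (ℕ → Bool) → (Fin n → ℝ) := fun a => (e.symm (f a) : Fin n → ℝ) with hg
  have hgc : Continuous g := continuous_subtype_val.comp (e.symm.continuous.comp hfc)
  have hginj : Function.Injective g :=
    Subtype.val_injective.comp (e.symm.injective.comp hfinj)
  set K : Set (Fin n → ℝ) := Set.range g with hKdef
  have hK : IsClosed K := (isCompact_range hgc).isClosed
  have hKunc : ¬ K.Countable := by
    intro hc
    have := hc.preimage hginj
    rw [Set.preimage_range] at this
    exact bern_aux_cantor this
  have hKB : ∀ z ∈ K, z ∉ B := by
    rintro z ⟨a, rfl⟩ hzB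
    have hzU : g a ∈ U := (e.symm (f a)).2
    have hfaS : f a ∈ S := hfS ⟨a, rfl⟩
    rcases hcoverVW ⟨hzU, hzB⟩ with hzV | hzW
    · exact hfaS (Or.inl ⟨e.symm (f a), hzV, e.apply_symm_apply _⟩)
    · exact hfaS (Or.inr ⟨e.symm (f a), hzW, e.apply_symm_apply _⟩)
  obtain ⟨b, hbB, hbK⟩ := (hB K hK hKunc).1
  exact hKB b hbK hbB

theorem stmt3 (n : ℕ) (hn : 2 ≤ n) (B : Set (Fin n → ℝ)) (hB : IsBernstein B) :
    (∀ U : Set (Fin n → ℝ), IsOpen U → Nonempty (U ≃ₜ (Fin n → ℝ)) →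
      IsConnected (U ∩ B)) ∧ LocallyConnectedSpace B := by
  refine ⟨fun U hU hE => bern_conn n hn B hB U hU hE, ?_⟩
  rw [locallyConnectedSpace_iff_connected_subsets]
  intro x t ht
  obtain ⟨s, hs, hst⟩ := (mem_nhds_subtype B x t).mp ht
  obtain ⟨r, hr, hball⟩ := Metric.mem_nhds_iff.mp hs
  refine ⟨Subtype.val ⁻¹' (Metric.ball (x : Fin n → ℝ) r),
    (mem_nhds_subtype B x _).mpr ⟨Metric.ball (x : Fin n → ℝ) r,
      Metric.ball_mem_nhds _ hr, subset_rfl⟩, ?_, fun y hy => hst (hball hy)⟩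
  have hconn : IsConnected (Metric.ball (x : Fin n → ℝ) r ∩ B) :=
    bern_conn n hn B hB _ Metric.isOpen_ball (bern_ball_homeo n _ hr)
  have himg : Subtype.val '' (Subtype.val ⁻¹' (Metric.ball (x : Fin n → ℝ) r))
      = B ∩ Metric.ball (x : Fin n → ℝ) r := Subtype.image_preimage_coe _ _
  rw [← Topology.IsInducing.subtypeVal.isPreconnected_image, himg, Set.inter_comm]
  exact hconn.isPreconnected
end

section
/- Let p ∈ ℝ^n \ {0} and let H be a subgroup of (ℝ^n, +) with p ∉ H and |H| < 𝔠. Then for any closed subset F of ℝ^n of cardinality 𝔠, there exists z ∈ F such that the subgroup generated by H ∪ {z} still does not contain p. -/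
/-!
If `p` lies in the subgroup generated by `H ∪ {z}` but not in `H`, then `p = m • z + h` with
`m ≠ 0` and `h ∈ H`, so `z = m⁻¹ • (p - h)`. These points are indexed by `ℤ × H`, hence there are
fewer than `𝔠` of them, and a set of cardinality `𝔠` contains a point that is none of them.
-/

open Cardinal

section BadPoints

variable (K : Type*) {V : Type*} [DivisionRing K] [AddCommGroup V] [Module K V]

/-- The points `z` that can bring `p` into the subgroup generated by `H ∪ {z}`. -/
def badPoints (p : V) (H : AddSubgroup V) : Set V :=
  Set.range fun q : ℤ × H => (q.1 : K)⁻¹ • (p - q.2)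

theorem exists_zsmul_eq_sub_of_mem_closure_union_singleton {p z : V} {H : AddSubgroup V}
    (hpH : p ∉ H) (hp : p ∈ AddSubgroup.closure ((H : Set V) ∪ {z})) :
    ∃ m : ℤ, m ≠ 0 ∧ ∃ h ∈ H, m • z = p - h := by
  rw [AddSubgroup.closure_union, AddSubgroup.closure_eq] at hp
  obtain ⟨h, hh, y, hy, rfl⟩ := AddSubgroup.mem_sup.mp hp
  obtain ⟨m, rfl⟩ := AddSubgroup.mem_closure_singleton.mp hy
  refine ⟨m, ?_, h, hh, by abel⟩
  rintro rfl
  exact hpH (by simpa using hh)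

theorem notMem_closure_union_singleton_of_notMem_badPoints [CharZero K] {p z : V}
    {H : AddSubgroup V} (hpH : p ∉ H) (hz : z ∉ badPoints K p H) :
    p ∉ AddSubgroup.closure ((H : Set V) ∪ {z}) := by
  intro hp
  obtain ⟨m, hm, h, hh, hmz⟩ := exists_zsmul_eq_sub_of_mem_closure_union_singleton hpH hp
  refine hz ⟨(m, ⟨h, hh⟩), ?_⟩
  change (m : K)⁻¹ • (p - h) = z
  rw [← hmz, ← Int.cast_smul_eq_zsmul K, inv_smul_smul₀ (Int.cast_ne_zero.mpr hm)]

theorem mk_badPoints_lt {c : Cardinal} (hc : ℵ₀ < c) (p : V) {H : AddSubgroup V}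
    (hH : #H < c) : #(badPoints K p H) < c := by
  refine mk_range_le.trans_lt ?_
  rw [mk_prod, mk_int, lift_aleph0, lift_uzero]
  exact mul_lt_of_lt hc.le (by simpa using hc) hH

end BadPoints

theorem stmt12_general (n : ℕ) (p : Fin n → ℝ)
    (H : AddSubgroup (Fin n → ℝ)) (hpH : p ∉ H)
    (hsmall : Cardinal.mk H < Cardinal.continuum)
    (F : Set (Fin n → ℝ))
    (hFcard : Cardinal.mk F = Cardinal.continuum) :
    ∃ z ∈ F, p ∉ AddSubgroup.closure ((H : Set (Fin n → ℝ)) ∪ {z}) := by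
  have hbad : #(badPoints ℝ p H) < #F :=
    hFcard ▸ mk_badPoints_lt ℝ aleph0_lt_continuum p hsmall
  obtain ⟨z, hzF, hz⟩ := Set.not_subset.mp fun hF => (mk_le_mk_of_subset hF).not_gt hbad
  exact ⟨z, hzF, notMem_closure_union_singleton_of_notMem_badPoints ℝ hpH hz⟩

theorem stmt12 (n : ℕ) (p : Fin n → ℝ) (hp : p ≠ 0)
    (H : AddSubgroup (Fin n → ℝ)) (hpH : p ∉ H)
    (hsmall : Cardinal.mk H < Cardinal.continuum)
    (F : Set (Fin n → ℝ)) (hFc : IsClosed F)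
    (hFcard : Cardinal.mk F = Cardinal.continuum) :
    ∃ z ∈ F, p ∉ AddSubgroup.closure ((H : Set (Fin n → ℝ)) ∪ {z}) :=
  stmt12_general n p H hpH hsmall F hFcard
end

section
/- For every n ≥ 2 there exists a proper additive subgroup G of ℝ^n that meets every uncountable closed subset of ℝ^n. -/
open Cardinal Set Metric

namespace Stmt13Aux

noncomputable abbrev I : Type := (Cardinal.continuum.ord).ToType

instance : Nonempty I := by
  rw [Ordinal.toType_nonempty_iff_ne_zero]
  intro h
  have := Cardinal.card_ord Cardinal.continuum
  rw [h, Ordinal.card_zero] at this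
  exact Cardinal.continuum_ne_zero this.symm

lemma mk_I : #I = continuum := by
  rw [Cardinal.mk_toType, Cardinal.card_ord]

lemma mkClosureLe {V : Type} [AddCommGroup V] (S : Set V) :
    #(AddSubgroup.closure S) ≤ max #S ℵ₀ := by
  have h := Submodule.span_int_eq_addSubgroupClosure S
  have h2 : (AddSubgroup.closure S : Set V) = (Submodule.span ℤ S : Set V) := by
    rw [← h]; rfl
  have h3 : (Submodule.span ℤ S : Set V) =
      Set.range (Finsupp.linearCombination ℤ ((↑) : S → V)) := by
    rw [Finsupp.span_eq_range_linearCombination]; rfl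
  rw [show #(AddSubgroup.closure S) = #((AddSubgroup.closure S : Set V)) from rfl, h2, h3]
  refine (Cardinal.mk_range_le).trans ?_
  rcases isEmpty_or_nonempty S with hS | hS
  · exact le_trans (le_of_lt (Cardinal.lt_aleph0_of_finite _)) (le_max_right _ _)
  · rw [Cardinal.mk_finsupp_of_infinite' S ℤ, Cardinal.mk_int]

lemma stepLemma {V : Type} [AddCommGroup V] [Module ℝ V] (p : V) (S : Set V)
    (hS : #S < continuum) (hp : p ∉ AddSubgroup.closure S)
    {F : Set V} (hF : continuum ≤ #F) :
    ∃ x ∈ F, p ∉ AddSubgroup.closure (insert x S) := by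
  set H := AddSubgroup.closure S with hH
  have hHcard : #H < continuum :=
    lt_of_le_of_lt (mkClosureLe S) (max_lt hS aleph0_lt_continuum)
  set Bad : Set V := Set.range (fun z : ℤ × H => ((z.1 : ℝ))⁻¹ • (p - (z.2 : V))) with hBad
  have hBadcard : #Bad < continuum := by
    refine lt_of_le_of_lt Cardinal.mk_range_le ?_
    rw [Cardinal.mk_prod]
    simp only [Cardinal.lift_id, Cardinal.mk_int]
    exact Cardinal.mul_lt_of_lt aleph0_le_continuum aleph0_lt_continuum hHcard
  have hns : ¬ F ⊆ Bad := fun hsub =>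
    absurd (hF.trans (Cardinal.mk_le_mk_of_subset hsub)) (not_le.mpr hBadcard)
  obtain ⟨x, hxF, hxB⟩ := Set.not_subset.mp hns
  refine ⟨x, hxF, fun hmem => ?_⟩
  rw [Set.insert_eq, AddSubgroup.closure_union, AddSubgroup.mem_sup] at hmem
  obtain ⟨y, hy, z, hz, hyz⟩ := hmem
  rw [AddSubgroup.mem_closure_singleton] at hy
  obtain ⟨k, hk⟩ := hy
  rcases eq_or_ne k 0 with rfl | hk0
  · rw [zero_zsmul] at hk
    rw [← hk, zero_add] at hyz
    exact hp (hyz ▸ hz)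
  · apply hxB
    refine ⟨(k, ⟨z, hz⟩), ?_⟩
    have hks : ((k : ℝ)) • x = p - z := by
      rw [Int.cast_smul_eq_zsmul, hk, ← hyz]; abel
    have hkR : (k : ℝ) ≠ 0 := Int.cast_ne_zero.mpr hk0
    simp only
    rw [← hks, inv_smul_smul₀ hkR]

lemma mk_Iic_lt (i : I) : #(Set.Iic i) < continuum := by
  haveI : IsWellOrder I (· < ·) := isWellOrder_lt
  have h1 : (Set.Iic i) = insert i (Set.Iio i) := by
    ext; simp [le_iff_lt_or_eq, or_comm]
  have h2 : #(Set.Iio i) < continuum := by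
    have hc : #{ j // j < i } = (Ordinal.typein ((· < ·) : I → I → Prop) i).card :=
      Ordinal.card_typein i
    have ht : Ordinal.typein ((· < ·) : I → I → Prop) i < Cardinal.continuum.ord := by
      have := Ordinal.typein_lt_type ((· < ·) : I → I → Prop) i
      rwa [Ordinal.type_toType] at this
    rw [Cardinal.lt_ord] at ht
    have heq : #(Set.Iio i) = #{ j // j < i } := rfl
    rw [heq, hc]
    exact ht
  rw [h1]
  refine lt_of_le_of_lt (Cardinal.mk_insert_le) ?_
  exact Cardinal.add_lt_of_lt aleph0_le_continuum h2 (nat_lt_continuum 1 |>.trans_le' (by norm_num))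

variable {V : Type} [AddCommGroup V] [Module ℝ V]

noncomputable def g (p : V) (f : I → Set V) : I → V :=
  WellFounded.fix wellFounded_lt (fun i rec =>
    Classical.epsilon fun x => x ∈ f i ∧
      p ∉ AddSubgroup.closure (insert x {y | ∃ j, ∃ _ : j < i, rec j ‹_› = y}))

omit [Module ℝ V] in
lemma g_eq (p : V) (f : I → Set V) (i : I) :
    g p f i = Classical.epsilon fun x => x ∈ f i ∧
      p ∉ AddSubgroup.closure (insert x {y | ∃ j, ∃ _ : j < i, g p f j = y}) := by
  unfold g
  exact WellFounded.fix_eq _ _ _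

lemma g_spec (p : V) (hp0 : p ≠ 0) (f : I → Set V) (hf : ∀ i, continuum ≤ #(f i)) (i : I) :
    g p f i ∈ f i ∧ p ∉ AddSubgroup.closure (g p f '' Set.Iic i) := by
  induction i using WellFoundedLT.induction with
  | ind i IH =>
    have hlt : p ∉ AddSubgroup.closure (g p f '' Set.Iio i) := by
      rcases isEmpty_or_nonempty {j : I // j < i} with he | hne
      · have hempty : g p f '' Set.Iio i = ∅ := by
          rw [Set.eq_empty_iff_forall_notMem]
          rintro y ⟨j, hj, rfl⟩
          exact he.elim ⟨j, hj⟩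
        rw [hempty, AddSubgroup.closure_empty]
        simpa using hp0
      · intro hmem
        have hdir : Directed (· ≤ ·)
            (fun j : {j : I // j < i} => AddSubgroup.closure (g p f '' Set.Iic j.1)) := by
          intro a b
          rcases le_total a.1 b.1 with h | h
          · exact ⟨b, AddSubgroup.closure_mono (Set.image_mono (Set.Iic_subset_Iic.mpr h)), le_rfl⟩
          · exact ⟨a, le_rfl, AddSubgroup.closure_mono (Set.image_mono (Set.Iic_subset_Iic.mpr h))⟩
        have hle : AddSubgroup.closure (g p f '' Set.Iio i) ≤
            ⨆ j : {j : I // j < i}, AddSubgroup.closure (g p f '' Set.Iic j.1) := by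
          rw [AddSubgroup.closure_le]
          rintro x ⟨j, hj, rfl⟩
          exact SetLike.le_def.mp (le_iSup (fun j : {j : I // j < i} =>
              AddSubgroup.closure (g p f '' Set.Iic j.1)) ⟨j, hj⟩)
            (AddSubgroup.subset_closure ⟨j, Set.self_mem_Iic, rfl⟩)
        have hmem2 := hle hmem
        rw [AddSubgroup.mem_iSup_of_directed hdir] at hmem2
        obtain ⟨j, hj⟩ := hmem2
        exact (IH j.1 j.2).2 hj
    have hcard : #(g p f '' Set.Iio i) < continuum :=
      lt_of_le_of_lt Cardinal.mk_image_le
        (lt_of_le_of_lt (Cardinal.mk_le_mk_of_subset Set.Iio_subset_Iic_self) (mk_Iic_lt i))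
    obtain ⟨x, hx1, hx2⟩ := stepLemma p _ hcard hlt (hf i)
    have hset : {y | ∃ j, ∃ _ : j < i, g p f j = y} = g p f '' Set.Iio i := by
      ext y
      constructor
      · rintro ⟨j, hj, rfl⟩; exact ⟨j, hj, rfl⟩
      · rintro ⟨j, hj, rfl⟩; exact ⟨j, hj, rfl⟩
    have hex : ∃ z, z ∈ f i ∧
        p ∉ AddSubgroup.closure (insert z {y | ∃ j, ∃ _ : j < i, g p f j = y}) :=
      ⟨x, hx1, by rw [hset]; exact hx2⟩
    have hgi := Classical.epsilon_spec hex
    rw [← g_eq] at hgi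
    refine ⟨hgi.1, ?_⟩
    have himg : g p f '' Set.Iic i = insert (g p f i) (g p f '' Set.Iio i) := by
      rw [show Set.Iic i = insert i (Set.Iio i) by ext; simp [le_iff_lt_or_eq, or_comm],
        Set.image_insert_eq]
    rw [himg, ← hset]
    exact hgi.2

lemma p_notMem (p : V) (hp0 : p ≠ 0) (f : I → Set V) (hf : ∀ i, continuum ≤ #(f i)) :
    p ∉ AddSubgroup.closure (Set.range (g p f)) := by
  intro hmem
  have hdir : Directed (· ≤ ·)
      (fun j : I => AddSubgroup.closure (g p f '' Set.Iic j)) := by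
    intro a b
    rcases le_total a b with h | h
    · exact ⟨b, AddSubgroup.closure_mono (Set.image_mono (Set.Iic_subset_Iic.mpr h)), le_rfl⟩
    · exact ⟨a, le_rfl, AddSubgroup.closure_mono (Set.image_mono (Set.Iic_subset_Iic.mpr h))⟩
  have hle : AddSubgroup.closure (Set.range (g p f)) ≤
      ⨆ j : I, AddSubgroup.closure (g p f '' Set.Iic j) := by
    rw [AddSubgroup.closure_le]
    rintro x ⟨j, rfl⟩
    exact SetLike.le_def.mp (le_iSup (fun j : I =>
        AddSubgroup.closure (g p f '' Set.Iic j)) j)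
      (AddSubgroup.subset_closure ⟨j, Set.self_mem_Iic, rfl⟩)
  have hmem2 := hle hmem
  rw [AddSubgroup.mem_iSup_of_directed hdir] at hmem2
  obtain ⟨j, hj⟩ := hmem2
  exact (g_spec p hp0 f hf j).2 hj

-- cardinality of nonempty closed sets in a separable metric space
lemma mk_closeds_le {α : Type} [MetricSpace α] [TopologicalSpace.SeparableSpace α] :
    #{F : Set α // IsClosed F ∧ F.Nonempty} ≤ continuum := by
  obtain ⟨D, hDc, hDd⟩ := TopologicalSpace.exists_countable_dense α
  have hinj : Function.Injective
      (fun F : {F : Set α // IsClosed F ∧ F.Nonempty} => (fun d : D => Metric.infDist d.1 F.1)) := by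
    rintro ⟨F₁, hF₁, hne₁⟩ ⟨F₂, hF₂, hne₂⟩ h
    simp only [Subtype.mk_eq_mk]
    have heq : (fun x => Metric.infDist x F₁) = fun x => Metric.infDist x F₂ := by
      refine Continuous.ext_on hDd (continuous_infDist_pt _) (continuous_infDist_pt _) ?_
      intro d hd
      exact congrFun h ⟨d, hd⟩
    ext x
    rw [hF₁.mem_iff_infDist_zero hne₁, hF₂.mem_iff_infDist_zero hne₂, congrFun heq x]
  calc #{F : Set α // IsClosed F ∧ F.Nonempty} ≤ #(D → ℝ) := Cardinal.mk_le_of_injective hinj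
    _ ≤ continuum := by
        rw [Cardinal.mk_arrow, Cardinal.mk_real, Cardinal.lift_id, Cardinal.lift_id]
        calc continuum ^ #D ≤ continuum ^ ℵ₀ :=
              Cardinal.power_le_power_left Cardinal.continuum_ne_zero
                ((Cardinal.mk_le_aleph0_iff).mpr hDc)
          _ = continuum := Cardinal.continuum_power_aleph0

lemma continuum_le_of_closed_uncountable {α : Type} [TopologicalSpace α] [PolishSpace α]
    {F : Set α} (hF : IsClosed F) (hunc : ¬ F.Countable) : continuum ≤ #F := by
  obtain ⟨f, hrange, -, hinj⟩ := hF.exists_nat_bool_injection_of_not_countable hunc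
  have h : #(ℕ → Bool) ≤ #F := by
    refine Cardinal.mk_le_of_injective (f := fun b => (⟨f b, hrange (Set.mem_range_self b)⟩ : F)) ?_
    intro a b hab
    exact hinj (Subtype.mk_eq_mk.mp hab)
  rwa [Cardinal.mk_arrow, Cardinal.mk_bool, Cardinal.mk_nat, Cardinal.lift_id,
    Cardinal.lift_id, Cardinal.two_power_aleph0] at h

end Stmt13Aux

open Stmt13Aux in
theorem stmt13 (n : ℕ) (hn : 2 ≤ n) :
    ∃ G : AddSubgroup (Fin n → ℝ), (G : Set (Fin n → ℝ)) ≠ Set.univ ∧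
      ∀ F : Set (Fin n → ℝ), IsClosed F → ¬ F.Countable →
        ((G : Set (Fin n → ℝ)) ∩ F).Nonempty := by
  set V := Fin n → ℝ with hV
  haveI : Nonempty (Fin n) := ⟨⟨0, by omega⟩⟩
  set p : V := fun _ => (1 : ℝ) with hp
  have hp0 : p ≠ 0 := by
    intro h
    have := congrFun h ⟨0, by omega⟩
    exact one_ne_zero this
  -- the type of uncountable closed sets
  set C := {F : Set V // IsClosed F ∧ ¬ F.Countable} with hC
  haveI : Nonempty C := by
    refine ⟨⟨Set.univ, isClosed_univ, ?_⟩⟩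
    intro hcnt
    haveI : Countable V := Set.countable_univ_iff.mp hcnt
    have : Countable ℝ := Function.Injective.countable
      (f := fun (x : ℝ) => (fun _ => x : V))
      (fun a b hab => congrFun hab ⟨0, by omega⟩)
    exact (inferInstance : Uncountable ℝ).not_countable this
  have hCcard : #C ≤ continuum := by
    refine le_trans (Cardinal.mk_le_of_injective
      (f := fun F : C => (⟨F.1, F.2.1, Set.nonempty_iff_ne_empty.mpr (fun h => F.2.2 (by simp [h]))⟩ :
        {F : Set V // IsClosed F ∧ F.Nonempty})) ?_) mk_closeds_le
    rintro ⟨F₁, h₁⟩ ⟨F₂, h₂⟩ h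
    exact Subtype.mk_eq_mk.mpr (Subtype.mk_eq_mk.mp h)
  obtain ⟨e⟩ : Nonempty (C ↪ I) := Cardinal.le_def _ _ |>.mp (hCcard.trans_eq mk_I.symm)
  set f : I → Set V := fun i => (Function.invFun e i).1 with hf
  have hsurj : Function.Surjective (Function.invFun e : I → C) :=
    Function.invFun_surjective e.injective
  have hfcard : ∀ i, continuum ≤ #(f i) := fun i =>
    continuum_le_of_closed_uncountable (Function.invFun e i).2.1 (Function.invFun e i).2.2
  refine ⟨AddSubgroup.closure (Set.range (g p f)), ?_, ?_⟩
  · intro h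
    have hpmem : p ∈ (AddSubgroup.closure (Set.range (g p f)) : Set V) := by
      rw [h]; trivial
    exact p_notMem p hp0 f hfcard hpmem
  · intro F hFc hFunc
    obtain ⟨i, hi⟩ := hsurj ⟨F, hFc, hFunc⟩
    refine ⟨g p f i, AddSubgroup.subset_closure (Set.mem_range_self i), ?_⟩
    have hFi : f i = F := congrArg Subtype.val hi
    exact hFi ▸ (g_spec p hp0 f hfcard i).1
end
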